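/- arXiv:2012.14658 — 2 statements merged into one kernel-verified Lean document; each statement's English description precedes it below -/
import Mathlib

section
/- For α ≤ β ≤ 1 with λ := α + β ∈ [1,2], the kernel K(x,y) = x^α y^β + x^β y^α satisfies K(x,y) ≤ x y^{λ-1} + x^{λ-1} y for all x, y > 0. -/
open Real

/-- For `α ≤ β ≤ 1` with `lam = α + β ∈ [1,2]`, the kernel `K(x,y) = x^α y^β + x^β y^α`
satisfies `K(x,y) ≤ x y^{lam-1} + x^{lam-1} y` for all `x, y > 0`. -/
theorem stmt_5 (α β : ℝ) (hαβ : α ≤ β) (hβ : β ≤ 1) (hlam1 : 1 ≤ α + β) (hlam2 : α + β ≤ 2)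
    (x y : ℝ) (hx : 0 < x) (hy : 0 < y) :
    x ^ α * y ^ β + x ^ β * y ^ α ≤ x * y ^ (α + β - 1) + x ^ (α + β - 1) * y := by
  have hs : 0 ≤ 1 - β := by linarith
  have ht : 0 ≤ 1 - α := by linarith
  have h1 : 0 ≤ (x ^ (1-β) - y ^ (1-β)) * (x ^ (1-α) - y ^ (1-α)) := by
    rcases le_total x y with h | h
    · have a1 : x ^ (1-β) ≤ y ^ (1-β) := Real.rpow_le_rpow hx.le h hs
      have a2 : x ^ (1-α) ≤ y ^ (1-α) := Real.rpow_le_rpow hx.le h ht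
      nlinarith
    · have a1 : y ^ (1-β) ≤ x ^ (1-β) := Real.rpow_le_rpow hy.le h hs
      have a2 : y ^ (1-α) ≤ x ^ (1-α) := Real.rpow_le_rpow hy.le h ht
      nlinarith
  have key : x ^ (1-β) * y ^ (1-α) + x ^ (1-α) * y ^ (1-β)
      ≤ x ^ (1-β) * x ^ (1-α) + y ^ (1-β) * y ^ (1-α) := by nlinarith
  have hP : 0 < x ^ (α+β-1) * y ^ (α+β-1) :=
    mul_pos (rpow_pos_of_pos hx _) (rpow_pos_of_pos hy _)
  have hmul := mul_le_mul_of_nonneg_left key hP.le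
  have e1 : x ^ (α+β-1) * y ^ (α+β-1) * (x ^ (1-β) * y ^ (1-α)) = x ^ α * y ^ β := by
    rw [show x ^ (α+β-1) * y ^ (α+β-1) * (x ^ (1-β) * y ^ (1-α))
        = (x ^ (α+β-1) * x ^ (1-β)) * (y ^ (α+β-1) * y ^ (1-α)) by ring,
      ← Real.rpow_add hx, ← Real.rpow_add hy]
    norm_num
  have e2 : x ^ (α+β-1) * y ^ (α+β-1) * (x ^ (1-α) * y ^ (1-β)) = x ^ β * y ^ α := by
    rw [show x ^ (α+β-1) * y ^ (α+β-1) * (x ^ (1-α) * y ^ (1-β))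
        = (x ^ (α+β-1) * x ^ (1-α)) * (y ^ (α+β-1) * y ^ (1-β)) by ring,
      ← Real.rpow_add hx, ← Real.rpow_add hy]
    norm_num
  have e3 : x ^ (α+β-1) * y ^ (α+β-1) * (x ^ (1-β) * x ^ (1-α)) = x * y ^ (α+β-1) := by
    rw [show x ^ (α+β-1) * y ^ (α+β-1) * (x ^ (1-β) * x ^ (1-α))
        = (x ^ (α+β-1) * x ^ (1-β) * x ^ (1-α)) * y ^ (α+β-1) by ring,
      ← Real.rpow_add hx, ← Real.rpow_add hx]
    norm_num
  have e4 : x ^ (α+β-1) * y ^ (α+β-1) * (y ^ (1-β) * y ^ (1-α)) = x ^ (α+β-1) * y := by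
    rw [show x ^ (α+β-1) * y ^ (α+β-1) * (y ^ (1-β) * y ^ (1-α))
        = x ^ (α+β-1) * (y ^ (α+β-1) * y ^ (1-β) * y ^ (1-α)) by ring,
      ← Real.rpow_add hy, ← Real.rpow_add hy]
    norm_num
  calc x ^ α * y ^ β + x ^ β * y ^ α
      = x ^ (α+β-1) * y ^ (α+β-1) * (x ^ (1-β) * y ^ (1-α) + x ^ (1-α) * y ^ (1-β)) := by
        rw [mul_add, e1, e2]
    _ ≤ x ^ (α+β-1) * y ^ (α+β-1) * (x ^ (1-β) * x ^ (1-α) + y ^ (1-β) * y ^ (1-α)) := hmul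
    _ = x * y ^ (α+β-1) + x ^ (α+β-1) * y := by rw [mul_add, e3, e4]
end

section
/- Let m > 1, A > 0, and φ(x) = (x^m − A^{m−1} x) 1_{(0,A)}(x). If b is a non-mass-transferring daughter distribution (b(z,x,y) = b̄(z,x,y)1_{(0,x)}(z) + b̄(z,y,x)1_{(0,y)}(z) with ∫_0^x z b̄(z,x,y) dz = x and b̄(z,x,y)=0 for z > x), then ζ_φ(x,y) := ∫_0^{x+y} φ(z) b(z,x,y) dz − φ(x) − φ(y) ≤ 0 for all x, y > 0. -/
/-!
On `(0, A)` one has `φ(z) = (z^(m-1) - A^(m-1)) z`, so `φ(z) / z` is nondecreasing on `(0, ∞)`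
(it increases up to `0` on `(0, A)` and vanishes afterwards). Hence `φ(z) ≤ (φ(x) / x) z` for
`0 < z ≤ x`, and integrating against the fragment density `b̄(·, x, y)`, whose first moment on
`(0, x)` is `x`, gives `∫₀ˣ φ(z) b̄(z, x, y) dz ≤ φ(x)`. The same holds with `x` and `y`
exchanged, and the two inequalities add up to `ζ_φ(x, y) ≤ 0`.
-/

open MeasureTheory Real

section WeightedIntegral

variable {μ : Measure ℝ} {f g : ℝ → ℝ} {s : Set ℝ}

lemma MeasureTheory.IntegrableOn.mul_of_abs_le_mul_self {C : ℝ} (hs : MeasurableSet s)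
    (hfg : AEStronglyMeasurable (fun z => f z * g z) (μ.restrict s))
    (hzg : IntegrableOn (fun z => z * g z) s μ) (hg : ∀ z ∈ s, 0 ≤ g z)
    (hf : ∀ z ∈ s, |f z| ≤ C * z) :
    IntegrableOn (fun z => f z * g z) s μ := by
  refine Integrable.mono' (hzg.const_mul C) hfg (ae_restrict_of_forall_mem hs fun z hz => ?_)
  calc ‖f z * g z‖ = |f z| * g z := by rw [norm_mul, norm_eq_abs, norm_of_nonneg (hg z hz)]
    _ ≤ C * z * g z := mul_le_mul_of_nonneg_right (hf z hz) (hg z hz)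
    _ = C * (z * g z) := mul_assoc _ _ _

lemma setIntegral_mul_le_mul_setIntegral {k : ℝ} (hs : MeasurableSet s)
    (hfg : IntegrableOn (fun z => f z * g z) s μ) (hzg : IntegrableOn (fun z => z * g z) s μ)
    (hg : ∀ z ∈ s, 0 ≤ g z) (hf : ∀ z ∈ s, f z ≤ k * z) :
    ∫ z in s, f z * g z ∂μ ≤ k * ∫ z in s, z * g z ∂μ := by
  rw [← integral_const_mul]
  refine setIntegral_mono_on hfg (hzg.const_mul k) hs fun z hz => ?_
  calc f z * g z ≤ k * z * g z := mul_le_mul_of_nonneg_right (hf z hz) (hg z hz)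
    _ = k * (z * g z) := mul_assoc _ _ _

lemma MeasureTheory.IntegrableOn.mul_indicator {t : Set ℝ} (hs : MeasurableSet s)
    (hfg : IntegrableOn (fun z => f z * g z) s μ) :
    IntegrableOn (fun z => f z * s.indicator g z) t μ := by
  simp_rw [← Set.indicator_mul_right]
  exact (hfg.integrable_indicator hs).integrableOn

lemma setIntegral_mul_indicator_of_subset {t : Set ℝ} (hs : MeasurableSet s) (hst : s ⊆ t) :
    ∫ z in t, f z * s.indicator g z ∂μ = ∫ z in s, f z * g z ∂μ := by
  simp_rw [← Set.indicator_mul_right]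
  rw [setIntegral_indicator hs, Set.inter_eq_right.mpr hst]

end WeightedIntegral

noncomputable def phi (m A : ℝ) : ℝ → ℝ :=
  (Set.Ioo (0 : ℝ) A).indicator fun z => z ^ m - A ^ (m - 1) * z

section Phi

variable {m A : ℝ}

lemma measurable_phi : Measurable (phi m A) :=
  (by fun_prop : Measurable fun z : ℝ => z ^ m - A ^ (m - 1) * z).indicator measurableSet_Ioo

lemma phi_eq_of_mem {z : ℝ} (hz : z ∈ Set.Ioo 0 A) :
    phi m A z = (z ^ (m - 1) - A ^ (m - 1)) * z := by
  rw [phi, Set.indicator_of_mem hz, sub_mul, ← rpow_add_one hz.1.ne', sub_add_cancel, mul_comm]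

lemma phi_eq_zero_of_le {z : ℝ} (hz : A ≤ z) : phi m A z = 0 :=
  Set.indicator_of_notMem (fun h => (h.2.trans_le hz).false) _

lemma phi_nonpos (hm : 1 ≤ m) {z : ℝ} : phi m A z ≤ 0 := by
  by_cases hz : z ∈ Set.Ioo 0 A
  · rw [phi_eq_of_mem hz]
    exact mul_nonpos_of_nonpos_of_nonneg
      (sub_nonpos.mpr (rpow_le_rpow hz.1.le hz.2.le (sub_nonneg.mpr hm))) hz.1.le
  · rw [phi, Set.indicator_of_notMem hz]

lemma abs_phi_le (hm : 1 ≤ m) (hA : 0 ≤ A) {z : ℝ} (hz : 0 < z) :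
    |phi m A z| ≤ A ^ (m - 1) * z := by
  rw [abs_of_nonpos (phi_nonpos hm)]
  by_cases hzA : z < A
  · rw [phi_eq_of_mem ⟨hz, hzA⟩]
    nlinarith [rpow_nonneg hz.le (m - 1)]
  · rw [phi_eq_zero_of_le (not_lt.mp hzA), neg_zero]
    exact mul_nonneg (rpow_nonneg hA _) hz.le

lemma phi_le_div_mul (hm : 1 ≤ m) {x z : ℝ} (hz : 0 < z) (hzx : z ≤ x) :
    phi m A z ≤ phi m A x / x * z := by
  by_cases hxA : x < A
  · have hx : 0 < x := hz.trans_le hzx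
    rw [phi_eq_of_mem ⟨hz, hzx.trans_lt hxA⟩, phi_eq_of_mem ⟨hx, hxA⟩,
      mul_div_cancel_right₀ _ hx.ne']
    gcongr
  · rw [phi_eq_zero_of_le (not_lt.mp hxA), zero_div, zero_mul]
    exact phi_nonpos hm

lemma setIntegral_phi_mul_le (hm : 1 ≤ m) (hA : 0 ≤ A) {g : ℝ → ℝ} (hgm : Measurable g)
    (hg : ∀ z, 0 ≤ g z) {x : ℝ} (hx : 0 < x) (hmass : ∫ z in Set.Ioo 0 x, z * g z = x) :
    IntegrableOn (fun z => phi m A z * g z) (Set.Ioo 0 x) ∧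
      ∫ z in Set.Ioo 0 x, phi m A z * g z ≤ phi m A x := by
  have hzg : IntegrableOn (fun z => z * g z) (Set.Ioo 0 x) := by
    by_contra h
    rw [integral_undef h] at hmass
    exact hx.ne hmass
  have hint : IntegrableOn (fun z => phi m A z * g z) (Set.Ioo 0 x) :=
    .mul_of_abs_le_mul_self measurableSet_Ioo (measurable_phi.mul hgm).aestronglyMeasurable hzg
      (fun z _ => hg z) fun z hz => abs_phi_le hm hA hz.1
  refine ⟨hint, ?_⟩
  calc ∫ z in Set.Ioo 0 x, phi m A z * g z
      ≤ phi m A x / x * ∫ z in Set.Ioo 0 x, z * g z :=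
        setIntegral_mul_le_mul_setIntegral measurableSet_Ioo hint hzg (fun z _ => hg z)
          fun z hz => phi_le_div_mul hm hz.1 hz.2.le
    _ = phi m A x := by rw [hmass, div_mul_cancel₀ _ hx.ne']

end Phi

theorem stmt_11_general (m A : ℝ) (hm : 1 < m) (hA : 0 < A) (bbar : ℝ → ℝ → ℝ → ℝ)
    (hnn : ∀ z x y, 0 ≤ bbar z x y)
    (hmeas : ∀ x y, Measurable (fun z => bbar z x y))
    (hmass : ∀ x y : ℝ, 0 < x → 0 < y → ∫ z in Set.Ioo (0:ℝ) x, z * bbar z x y = x)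
    (x y : ℝ) (hx : 0 < x) (hy : 0 < y) :
    (∫ z in Set.Ioo (0:ℝ) (x + y),
          (Set.Ioo (0:ℝ) A).indicator (fun z => z ^ m - A ^ (m - 1) * z) z
            * ((Set.Ioo (0:ℝ) x).indicator (fun z => bbar z x y) z
              + (Set.Ioo (0:ℝ) y).indicator (fun z => bbar z y x) z))
        - (Set.Ioo (0:ℝ) A).indicator (fun z => z ^ m - A ^ (m - 1) * z) x
        - (Set.Ioo (0:ℝ) A).indicator (fun z => z ^ m - A ^ (m - 1) * z) y
      ≤ 0 := by
  change (∫ z in Set.Ioo 0 (x + y), phi m A z * ((Set.Ioo 0 x).indicator (bbar · x y) z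
    + (Set.Ioo 0 y).indicator (bbar · y x) z)) - phi m A x - phi m A y ≤ 0
  obtain ⟨hint_x, hle_x⟩ :=
    setIntegral_phi_mul_le hm.le hA.le (hmeas x y) (hnn · x y) hx (hmass x y hx hy)
  obtain ⟨hint_y, hle_y⟩ :=
    setIntegral_phi_mul_le hm.le hA.le (hmeas y x) (hnn · y x) hy (hmass y x hy hx)
  have hsub_x : Set.Ioo 0 x ⊆ Set.Ioo 0 (x + y) := Set.Ioo_subset_Ioo_right (by linarith)
  have hsub_y : Set.Ioo 0 y ⊆ Set.Ioo 0 (x + y) := Set.Ioo_subset_Ioo_right (by linarith)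
  simp_rw [mul_add]
  rw [integral_add (hint_x.mul_indicator measurableSet_Ioo)
      (hint_y.mul_indicator measurableSet_Ioo),
    setIntegral_mul_indicator_of_subset measurableSet_Ioo hsub_x,
    setIntegral_mul_indicator_of_subset measurableSet_Ioo hsub_y]
  linarith

/-- For `m > 1`, `A > 0`, `φ(x) = (x^m − A^{m−1} x) 1_{(0,A)}(x)`, and a
non-mass-transferring daughter distribution `b`, one has `ζ_φ(x,y) ≤ 0`. -/
theorem stmt_11 (m A : ℝ) (hm : 1 < m) (hA : 0 < A) (bbar : ℝ → ℝ → ℝ → ℝ)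
    (hnn : ∀ z x y, 0 ≤ bbar z x y)
    (hmeas : ∀ x y, Measurable (fun z => bbar z x y))
    (hvan : ∀ z x y, x < z → bbar z x y = 0)
    (hmass : ∀ x y : ℝ, 0 < x → 0 < y → ∫ z in Set.Ioo (0:ℝ) x, z * bbar z x y = x)
    (x y : ℝ) (hx : 0 < x) (hy : 0 < y) :
    (∫ z in Set.Ioo (0:ℝ) (x + y),
          (Set.Ioo (0:ℝ) A).indicator (fun z => z ^ m - A ^ (m - 1) * z) z
            * ((Set.Ioo (0:ℝ) x).indicator (fun z => bbar z x y) z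
              + (Set.Ioo (0:ℝ) y).indicator (fun z => bbar z y x) z))
        - (Set.Ioo (0:ℝ) A).indicator (fun z => z ^ m - A ^ (m - 1) * z) x
        - (Set.Ioo (0:ℝ) A).indicator (fun z => z ^ m - A ^ (m - 1) * z) y
      ≤ 0 :=
  stmt_11_general m A hm hA bbar hnn hmeas hmass x y hx hy
end
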